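/- arXiv:2110.07647 — 5 statements merged into one kernel-verified Lean document; each statement's English description precedes it below -/
import Mathlib

section
/- Consider the dataset 𝒳₃² with a symmetric mixing probability measure μ on ℝ supported in [0,1]. Let ε ∈ (0, 1/3] and suppose μ((1/2 − ε/2, 1/2 + ε/2)) > 3/4. Then the Mixup-optimal local classifier at the point 1 (whose true class is 2) favors class 1: h_ε^1(1) > 1/2, so h_ε does not achieve zero classification error on 𝒳₃². -/
open MeasureTheory

noncomputable section

variable {E : Type*} [NormedAddCommGroup E] [NormedSpace ℝ E]

/-- The set of mixing coefficients `λ ∈ [0,1]` for which the mixed point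
`λ • s + (1 - λ) • t` lies within distance `ε` of `x`. -/
def mixSet (s t x : E) (ε : ℝ) : Set ℝ :=
  {l : ℝ | l ∈ Set.Icc (0 : ℝ) 1 ∧ ‖l • s + (1 - l) • t - x‖ < ε}

/-- `ξ^{i,j}_{x,ε}`: the (normalized) measure of pairs and coefficients mixing
a point of `Xi` with a point of `Xj` into the `ε`-ball around `x`. -/
def xiMeas (μ : Measure ℝ) (N : ℕ) (Xi Xj : Finset E) (x : E) (ε : ℝ) : ℝ :=
  (1 / (N : ℝ) ^ 2) * ∑ s ∈ Xi, ∑ t ∈ Xj, (μ (mixSet s t x ε)).toReal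

/-- `ξ^{i,j}_{x,ε,λ}`: the corresponding expectation of `λ`. -/
def xiLam (μ : Measure ℝ) (N : ℕ) (Xi Xj : Finset E) (x : E) (ε : ℝ) : ℝ :=
  (1 / (N : ℝ) ^ 2) * ∑ s ∈ Xi, ∑ t ∈ Xj, ∫ l in mixSet s t x ε, l ∂μ

/-- Numerator of the Mixup-optimal local classifier value `h_ε^i(x)`. -/
def hNum {k : ℕ} (μ : Measure ℝ) (N : ℕ) (X : Fin k → Finset E) (i : Fin k)
    (x : E) (ε : ℝ) : ℝ :=
  xiMeas μ N (X i) (X i) x ε +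
    ∑ j ∈ Finset.univ.filter (fun j => j ≠ i),
      (xiLam μ N (X i) (X j) x ε +
        (xiMeas μ N (X j) (X i) x ε - xiLam μ N (X j) (X i) x ε))

/-- Denominator of the Mixup-optimal local classifier value. -/
def hDen {k : ℕ} (μ : Measure ℝ) (N : ℕ) (X : Fin k → Finset E) (x : E) (ε : ℝ) : ℝ :=
  ∑ q : Fin k, hNum μ N X q x ε

/-- The Mixup-optimal local classifier value `h_ε^i(x)`. -/
def hEps {k : ℕ} (μ : Measure ℝ) (N : ℕ) (X : Fin k → Finset E) (i : Fin k)
    (x : E) (ε : ℝ) : ℝ :=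
  hNum μ N X i x ε / hDen μ N X x ε

end


/-! Reflecting `λ ↦ 1 - λ` swaps the two endpoints of a mixed pair, so for a symmetric `μ`
we get `ξ^{j,i} = ξ^{i,j}` and `ξ^{j,i}_λ = ξ^{i,j} - ξ^{i,j}_λ`, and the numerator of `h_ε^i`
collapses to `ξ^{i,i} + 2 ∑_{j ≠ i} ξ^{i,j}_λ`.

At `x = 1`, mixing `0` with `2` lands in the ball exactly for `λ` in the central interval, of
mass `A > 3/4`; mixing `0` or `2` with `1` lands there for `λ ∈ [0, ε)`, of mass `B`. Hence
`9 h¹ ≥ 2A` and `9 h² ≤ 1 + 4B`. By symmetry `(1 - ε, 1]` also has mass `B`, and for `ε ≤ 1/3`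
the three intervals are disjoint, so `A + 2B ≤ 1`, which together with `A > 3/4` gives
`2A > 1 + 4B`. -/

open MeasureTheory Set

section MixupWeights

variable {E : Type*} [NormedAddCommGroup E] [NormedSpace ℝ E] {μ : Measure ℝ} {N : ℕ}
  {s t x : E} {ε : ℝ}

theorem mixSet_subset_Icc : mixSet s t x ε ⊆ Icc 0 1 := fun _ hl => hl.1

theorem measurableSet_mixSet : MeasurableSet (mixSet s t x ε) :=
  measurableSet_Icc.inter <| measurableSet_lt
    (f := fun l : ℝ => ‖l • s + (1 - l) • t - x‖) (by fun_prop : Continuous _).measurable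
    measurable_const

theorem mixSet_swap : mixSet t s x ε = (fun l => 1 - l) ⁻¹' mixSet s t x ε := by
  ext l
  simp only [mixSet, mem_preimage, mem_ofPred_eq, mem_Icc, sub_nonneg, sub_le_self_iff,
    sub_sub_cancel, add_comm (l • t)]
  tauto

theorem mixSet_self_of_le (h : ε ≤ ‖s - x‖) : mixSet s s x ε = ∅ := by
  ext l
  simp only [mixSet, ← add_smul, add_sub_cancel, one_smul, mem_ofPred_eq, mem_empty_iff_false,
    iff_false, not_and, not_lt]
  exact fun _ => h

theorem mixSet_left_self (h : ε ≤ ‖s - x‖) : mixSet s x x ε = Ico 0 (ε / ‖s - x‖) := by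
  have hmix : ∀ l : ℝ, l • s + (1 - l) • x - x = l • (s - x) := fun l => by module
  ext l
  simp only [mixSet, mem_ofPred_eq, mem_Icc, mem_Ico, hmix, norm_smul, Real.norm_eq_abs]
  rcases (norm_nonneg (s - x)).eq_or_lt with hd | hd
  · simp only [← hd, mul_zero, div_zero]
    constructor
    · rintro ⟨-, hε⟩
      linarith
    · rintro ⟨h₀, h₁⟩
      linarith
  · rw [lt_div_iff₀ hd]
    constructor
    · rintro ⟨⟨h₀, -⟩, hl⟩
      exact ⟨h₀, by rwa [abs_of_nonneg h₀] at hl⟩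
    · rintro ⟨h₀, hl⟩
      refine ⟨⟨h₀, ?_⟩, by rwa [abs_of_nonneg h₀]⟩
      by_contra! h₁
      nlinarith

theorem integrableOn_mixSet [IsFiniteMeasure μ] :
    IntegrableOn (fun l => l) (mixSet s t x ε) μ :=
  (continuous_id.integrableOn_Icc).mono_set mixSet_subset_Icc

theorem measure_mixSet_swap (hsym : μ.map (fun l => 1 - l) = μ) :
    μ (mixSet t s x ε) = μ (mixSet s t x ε) := by
  rw [mixSet_swap]
  exact MeasurePreserving.measure_preimage ⟨by fun_prop, hsym⟩
    measurableSet_mixSet.nullMeasurableSet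

theorem setIntegral_mixSet_swap [IsFiniteMeasure μ] (hsym : μ.map (fun l => 1 - l) = μ) :
    ∫ l in mixSet t s x ε, l ∂μ = μ.real (mixSet s t x ε) - ∫ l in mixSet s t x ε, l ∂μ := by
  have hreflect := MeasurePreserving.setIntegral_preimage_emb ⟨by fun_prop, hsym⟩
    (MeasurableEquiv.subLeft (1 : ℝ)).measurableEmbedding (fun l => 1 - l) (mixSet s t x ε)
  simp only [sub_sub_cancel] at hreflect
  rw [mixSet_swap, hreflect,
    integral_sub (f := fun _ => (1 : ℝ)) integrableOn_const integrableOn_mixSet,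
    setIntegral_const, smul_eq_mul, mul_one]

theorem xiMeas_nonneg (Xi Xj : Finset E) : 0 ≤ xiMeas μ N Xi Xj x ε := by
  unfold xiMeas
  positivity

theorem xiLam_nonneg (Xi Xj : Finset E) : 0 ≤ xiLam μ N Xi Xj x ε :=
  mul_nonneg (by positivity) <| Finset.sum_nonneg fun _ _ => Finset.sum_nonneg fun _ _ =>
    setIntegral_nonneg measurableSet_mixSet fun _ hl => hl.1.1

theorem xiMeas_singleton_le [IsZeroOrProbabilityMeasure μ] :
    xiMeas μ N {s} {t} x ε ≤ 1 / (N : ℝ) ^ 2 := by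
  simp only [xiMeas, Finset.sum_singleton, ← measureReal_def]
  exact mul_le_of_le_one_right (by positivity) measureReal_le_one

theorem xiMeas_swap (hsym : μ.map (fun l => 1 - l) = μ) (Xi Xj : Finset E) :
    xiMeas μ N Xj Xi x ε = xiMeas μ N Xi Xj x ε := by
  rw [xiMeas, xiMeas, Finset.sum_comm]
  simp only [measure_mixSet_swap hsym (s := _)]

theorem xiLam_swap [IsFiniteMeasure μ] (hsym : μ.map (fun l => 1 - l) = μ) (Xi Xj : Finset E) :
    xiLam μ N Xj Xi x ε = xiMeas μ N Xi Xj x ε - xiLam μ N Xi Xj x ε := by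
  simp only [xiMeas, xiLam, ← mul_sub, ← Finset.sum_sub_distrib, ← measureReal_def]
  rw [Finset.sum_comm]
  congr 1
  exact Finset.sum_congr rfl fun _ _ => Finset.sum_congr rfl fun _ _ =>
    setIntegral_mixSet_swap hsym

theorem hNum_eq_of_map_eq [IsFiniteMeasure μ] (hsym : μ.map (fun l => 1 - l) = μ) {k : ℕ}
    (X : Fin k → Finset E) (i : Fin k) :
    hNum μ N X i x ε = xiMeas μ N (X i) (X i) x ε +
      2 * ∑ j ∈ Finset.univ.filter (fun j => j ≠ i), xiLam μ N (X i) (X j) x ε := by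
  rw [hNum, Finset.mul_sum]
  congr 1
  refine Finset.sum_congr rfl fun j _ => ?_
  rw [xiLam_swap hsym (X i) (X j), xiMeas_swap hsym (X i) (X j)]
  ring

end MixupWeights

theorem one_half_lt_div_add {a b : ℝ} (hb : 0 ≤ b) (hba : b < a) : 1 / 2 < a / (a + b) := by
  rw [lt_div_iff₀ (by linarith)]
  linarith

section AlternatingLine

variable {μ : Measure ℝ} {ε : ℝ}

theorem mixSet_zero_two (hε : ε ≤ 1) :
    mixSet (0 : ℝ) 2 1 ε = Ioo (1 / 2 - ε / 2) (1 / 2 + ε / 2) := by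
  ext l
  simp only [mixSet, mem_ofPred_eq, mem_Icc, mem_Ioo, smul_eq_mul, Real.norm_eq_abs, abs_lt]
  constructor
  · rintro ⟨-, h₁, h₂⟩
    constructor <;> linarith
  · rintro ⟨h₁, h₂⟩
    exact ⟨⟨by linarith, by linarith⟩, by linarith, by linarith⟩

theorem xiMeas_zero_two_zero_two (hsym : μ.map (fun l => 1 - l) = μ) (hε : ε ≤ 1) :
    xiMeas μ 3 {0, 2} {0, 2} (1 : ℝ) ε =
      2 / 9 * μ.real (Ioo (1 / 2 - ε / 2) (1 / 2 + ε / 2)) := by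
  have h₀ : mixSet (0 : ℝ) 0 1 ε = ∅ := mixSet_self_of_le (by norm_num [hε])
  have h₂ : mixSet (2 : ℝ) 2 1 ε = ∅ := mixSet_self_of_le (by norm_num [hε])
  simp only [xiMeas, Finset.sum_insert (by norm_num : (0 : ℝ) ∉ ({2} : Finset ℝ)),
    Finset.sum_singleton]
  rw [measure_mixSet_swap hsym (s := (0 : ℝ)) (t := 2), h₀, h₂, mixSet_zero_two hε]
  simp only [measure_empty, ENNReal.toReal_zero, ← measureReal_def]
  norm_num
  ring

theorem xiMeas_zero_two_one (hε : ε ≤ 1) :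
    xiMeas μ 3 {0, 2} {1} (1 : ℝ) ε = 2 / 9 * μ.real (Ico 0 ε) := by
  have h₀ : mixSet (0 : ℝ) 1 1 ε = Ico 0 ε := by
    simpa using mixSet_left_self (s := (0 : ℝ)) (x := 1) (ε := ε) (by norm_num [hε])
  have h₂ : mixSet (2 : ℝ) 1 1 ε = Ico 0 ε := by
    simpa [show (2 : ℝ) - 1 = 1 by norm_num] using
      mixSet_left_self (s := (2 : ℝ)) (x := 1) (ε := ε) (by norm_num [hε])
  simp only [xiMeas, Finset.sum_insert (by norm_num : (0 : ℝ) ∉ ({2} : Finset ℝ)),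
    Finset.sum_singleton, h₀, h₂, ← measureReal_def]
  norm_num
  ring

theorem measureReal_Ioo_add_two_mul_measureReal_Ico_le [IsProbabilityMeasure μ]
    (hsym : μ.map (fun l => 1 - l) = μ) (hε : ε ≤ 1 / 3) :
    μ.real (Ioo (1 / 2 - ε / 2) (1 / 2 + ε / 2)) + 2 * μ.real (Ico 0 ε) ≤ 1 := by
  set R := (fun l : ℝ => 1 - l) ⁻¹' Ico 0 ε
  have hR : μ.real R = μ.real (Ico 0 ε) := by
    simp only [measureReal_def, R, MeasurePreserving.measure_preimage ⟨by fun_prop, hsym⟩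
      measurableSet_Ico.nullMeasurableSet]
  have hdisj₁ : Disjoint (Ioo (1 / 2 - ε / 2) (1 / 2 + ε / 2)) (Ico 0 ε) :=
    disjoint_left.mpr fun l h₁ h₂ => by linarith [h₁.1, h₂.2]
  have hdisj₂ : Disjoint (Ioo (1 / 2 - ε / 2) (1 / 2 + ε / 2) ∪ Ico 0 ε) R := by
    refine disjoint_left.mpr fun l h₁ h₂ => ?_
    simp only [R, mem_preimage, mem_Ico] at h₂
    rcases h₁ with h₁ | h₁ <;> linarith [h₁.1, h₁.2]
  calc μ.real (Ioo (1 / 2 - ε / 2) (1 / 2 + ε / 2)) + 2 * μ.real (Ico 0 ε)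
      = μ.real (Ioo (1 / 2 - ε / 2) (1 / 2 + ε / 2) ∪ Ico 0 ε ∪ R) := by
        rw [measureReal_union hdisj₂ (measurableSet_Ico.preimage (by fun_prop)),
          measureReal_union hdisj₁ measurableSet_Ico, hR]
        ring
    _ ≤ 1 := measureReal_le_one

end AlternatingLine

theorem mixup_fails_on_X32_concentrated_general
    (μ : MeasureTheory.Measure ℝ) [MeasureTheory.IsProbabilityMeasure μ]
    (hsym : μ.map (fun l => 1 - l) = μ)
    (ε : ℝ) (hε : ε ∈ Set.Ioc (0 : ℝ) (1 / 3))
    (hconc : 3 / 4 < μ (Set.Ioo (1 / 2 - ε / 2) (1 / 2 + ε / 2))) :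
    1 / 2 < hEps μ 3 ![({0, 2} : Finset ℝ), ({1} : Finset ℝ)] 0 (1 : ℝ) ε := by
  have hε₁ : ε ≤ 1 := hε.2.trans (by norm_num)
  have hcenter : 3 / 4 < μ.real (Ioo (1 / 2 - ε / 2) (1 / 2 + ε / 2)) := by
    simpa [measureReal_def] using ENNReal.toReal_strict_mono (measure_ne_top μ _) hconc
  have hmass := measureReal_Ioo_add_two_mul_measureReal_Ico_le hsym hε.2
  have hother : (Finset.univ.filter fun j : Fin 2 => j ≠ 0) = {1} ∧
      (Finset.univ.filter fun j : Fin 2 => j ≠ 1) = {0} := by decide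
  rw [hEps, hDen, Fin.sum_univ_two, hNum_eq_of_map_eq hsym, hNum_eq_of_map_eq hsym]
  simp only [hother, Finset.sum_singleton, Matrix.cons_val_zero, Matrix.cons_val_one]
  refine one_half_lt_div_add
    (add_nonneg (xiMeas_nonneg _ _) (mul_nonneg zero_le_two (xiLam_nonneg _ _))) ?_
  rw [xiLam_swap hsym, xiMeas_zero_two_zero_two hsym hε₁, xiMeas_zero_two_one hε₁]
  linarith [xiMeas_singleton_le (μ := μ) (N := 3) (s := (1 : ℝ)) (t := 1) (x := 1) (ε := ε),
    xiLam_nonneg (μ := μ) (N := 3) ({0, 2} : Finset ℝ) {1} (x := 1) (ε := ε)]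

/-- On the 3-point alternating line dataset `𝒳₃²` (`X₁ = {0,2}`, `X₂ = {1}` in `ℝ`),
a symmetric mixing measure concentrating more than `3/4` of its mass near `1/2`
makes the Mixup-optimal local classifier at the point `1` favor class 1. -/
theorem mixup_fails_on_X32_concentrated
    (μ : MeasureTheory.Measure ℝ) [MeasureTheory.IsProbabilityMeasure μ]
    (hsupp : μ (Set.Icc (0 : ℝ) 1)ᶜ = 0)
    (hsym : μ.map (fun l => 1 - l) = μ)
    (ε : ℝ) (hε : ε ∈ Set.Ioc (0 : ℝ) (1 / 3))
    (hconc : 3 / 4 < μ (Set.Ioo (1 / 2 - ε / 2) (1 / 2 + ε / 2))) :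
    1 / 2 < hEps μ 3 ![({0, 2} : Finset ℝ), ({1} : Finset ℝ)] 0 (1 : ℝ) ε :=
  mixup_fails_on_X32_concentrated_general μ hsym ε hε hconc
end

section
/- Let n ≥ 1 and m ≥ 6. Let S ⊆ (ℝ^n)^m be the set of tuples (x_1, …, x_m) for which there exist (y_1, …, y_m) ∈ (ℝ^n)^m and a bijection φ of the set of unordered pairs {i, j} of distinct elements of {1, …, m} such that (y_i + y_j)/2 = (x_a + x_b)/2 whenever φ({i, j}) = {a, b}, and yet (y_1, …, y_m) is not a reordering of (x_1, …, x_m) (i.e., there is no permutation σ of {1, …, m} with y_i = x_{σ(i)} for all i). Then S is contained in a set of Lebesgue measure zero in (ℝ^n)^m ≅ ℝ^{nm}. Consequently, if x_1, …, x_m are drawn i.i.d. from a probability measure on ℝ^n that is absolutely continuous with respect to Lebesgue measure, then with probability 1 the points are uniquely determined, up to order, by their m(m−1)/2 pairwise midpoints. -/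
open MeasureTheory

/-- The multiset of pairwise midpoints `(x i + x j)/2` of a tuple of points, over all
unordered pairs of distinct indices. -/
noncomputable def pairwiseMidpoints {E : Type*} [AddCommGroup E] [Module ℝ E] {m : ℕ}
    (x : Fin m → E) : Multiset E :=
  (Finset.univ.filter fun p : Sym2 (Fin m) => ¬p.IsDiag).val.map
    (Sym2.lift ⟨fun i j => midpoint ℝ (x i) (x j), fun i j => midpoint_comm (x i) (x j)⟩)

/-!
If `y` has the same pairwise midpoints as `x`, some permutation `φ` of the pairs carries the
midpoints of `x` to those of `y`, so `x` lies in the subspace `relabelSubspace φ` of configurations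
whose midpoints, relabelled by `φ`, are again the midpoints of a configuration. There are finitely
many `φ`, and a proper subspace is Lebesgue-null. If the subspace is everything, test it on the
configurations `Pi.single k v`: the sum of all pairwise midpoints is `(m - 1) / 2` times the sum of
the points, so the answer `t` for `k` is a real tuple with pairwise sums in `{0, 1}` and total `1`,
hence (for `m ≥ 5`) a unit vector `Pi.single (ρ k) 1`. So `φ` maps the pairs containing `ρ k`
onto the pairs containing `k`; `ρ` is a permutation, and `y` is the reordering of `x` by its
inverse.
-/

open Finset

theorem Equiv.Perm.exists_comp_eq_of_map_univ_eq {α β : Type*} [Fintype α] [DecidableEq β]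
    {f g : α → β} (h : univ.val.map f = univ.val.map g) :
    ∃ σ : Equiv.Perm α, f = g ∘ σ := by
  classical
  have hfiber (b : β) : Fintype.card {a // f a = b} = Fintype.card {a // g a = b} := by
    simpa [Fintype.card_subtype, Multiset.count_map, Finset.card, Finset.filter_val, eq_comm]
      using congrArg (Multiset.count b) h
  exact ⟨Equiv.ofFiberEquiv fun b => Fintype.equivOfCardEq (hfiber b),
    funext fun a => (Equiv.ofFiberEquiv_map _ a).symm⟩

theorem Finset.sum_offDiag_sym2_mk {ι M : Type*} [Fintype ι] [DecidableEq ι] [AddCommMonoid M]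
    (g : Sym2 ι → M) :
    ∑ p ∈ univ.offDiag, g s(p.1, p.2) = 2 • ∑ e : {e : Sym2 ι // ¬e.IsDiag}, g e := by
  have himage (e : Sym2 ι) : e ∈ univ.offDiag.image Sym2.mk.uncurry ↔ ¬e.IsDiag := by
    induction e using Sym2.ind with
    | _ i j => exact ⟨by aesop, fun h => mem_image.2 ⟨(i, j), by simpa using h, rfl⟩⟩
  rw [← sum_subtype _ himage, smul_sum]
  refine (sum_image' _ fun p hp => ?_).symm
  obtain ⟨i, j⟩ := p
  have hij : i ≠ j := (mem_offDiag.1 hp).2.2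
  have hfiber :
      univ.offDiag.filter (fun q => Sym2.mk.uncurry q = s(i, j)) = {(i, j), (j, i)} := by
    ext ⟨a, b⟩; aesop
  rw [Function.uncurry_apply_pair, hfiber, sum_pair (by simp [hij])]
  simp [two_nsmul, Sym2.eq_swap]

theorem Fintype.exists_ne_ne {ι : Type*} [Fintype ι] [DecidableEq ι] (h : 3 ≤ card ι)
    (a b : ι) : ∃ c, c ≠ a ∧ c ≠ b := by
  have : #{a, b} < #(univ : Finset ι) := by
    rw [card_univ]; exact (card_le_two).trans_lt (by omega)
  obtain ⟨c, -, hc⟩ := exists_mem_notMem_of_card_lt_card this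
  exact ⟨c, by simp_all⟩

section PairMidpoints

variable {ι V W : Type*} [AddCommGroup V] [Module ℝ V] [AddCommGroup W] [Module ℝ W]

theorem eq_midpoint_add_midpoint_sub_midpoint (a b c : V) :
    a = midpoint ℝ a b + midpoint ℝ a c - midpoint ℝ b c := by
  simp only [midpoint_eq_smul_add, invOf_eq_inv]
  module

variable (V) in
noncomputable def pairMidpoints : (ι → V) →ₗ[ℝ] ({e : Sym2 ι // ¬e.IsDiag} → V) where
  toFun x e := Sym2.lift ⟨fun i j => midpoint ℝ (x i) (x j), fun i j => midpoint_comm _ _⟩ e.1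
  map_add' x y := by
    ext ⟨e, he⟩
    induction e using Sym2.ind
    simp only [midpoint_eq_smul_add, Sym2.lift_mk, Pi.add_apply]
    module
  map_smul' c x := by
    ext ⟨e, he⟩
    induction e using Sym2.ind
    simp only [midpoint_eq_smul_add, Sym2.lift_mk, Pi.smul_apply, RingHom.id_apply]
    module

@[simp]
theorem pairMidpoints_mk (x : ι → V) {i j : ι} (h : ¬s(i, j).IsDiag) :
    pairMidpoints V x ⟨s(i, j), h⟩ = midpoint ℝ (x i) (x j) := rfl

theorem pairwiseMidpoints_eq_map {m : ℕ} (x : Fin m → V) :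
    pairwiseMidpoints x = univ.val.map (pairMidpoints V x) := by
  rw [pairwiseMidpoints, ← Finset.subtype_map, Finset.subtype_univ, Finset.map_val,
    Multiset.map_map]
  rfl

theorem pairMidpoints_comp_linearMap (f : V →ₗ[ℝ] W) (x : ι → V) :
    pairMidpoints W (f ∘ x) = f ∘ pairMidpoints V x := by
  ext ⟨e, he⟩
  induction e using Sym2.ind
  simp [midpoint_eq_smul_add]

theorem pairMidpoints_single_one [DecidableEq ι] (a : ι) (e : {e : Sym2 ι // ¬e.IsDiag}) :
    pairMidpoints ℝ (Pi.single a (1 : ℝ)) e = if a ∈ e.1 then 1 / 2 else 0 := by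
  obtain ⟨e, he⟩ := e
  induction e using Sym2.ind with
  | _ i j =>
    have hij : i ≠ j := by simpa using he
    rcases eq_or_ne a i with rfl | hai <;> rcases eq_or_ne a j with rfl | haj <;>
      simp_all [midpoint_eq_smul_add, eq_comm]

variable [Fintype ι] [DecidableEq ι]

theorem pairMidpoints_injective (hι : 3 ≤ Fintype.card ι) :
    Function.Injective (pairMidpoints V : (ι → V) → _) := by
  intro x y h
  funext i
  obtain ⟨j, hji, -⟩ := Fintype.exists_ne_ne hι i i
  obtain ⟨k, hki, hkj⟩ := Fintype.exists_ne_ne hι i j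
  have hmid {a b : ι} (hab : a ≠ b) : midpoint ℝ (x a) (x b) = midpoint ℝ (y a) (y b) :=
    congrFun h ⟨s(a, b), by simpa using hab⟩
  rw [eq_midpoint_add_midpoint_sub_midpoint (x i) (x j) (x k),
    eq_midpoint_add_midpoint_sub_midpoint (y i) (y j) (y k),
    hmid hji.symm, hmid hki.symm, hmid hkj.symm]

theorem sum_pairMidpoints (x : ι → V) :
    ∑ e, pairMidpoints V x e = ((Fintype.card ι - 1 : ℝ) / 2) • ∑ i, x i := by
  have hoff : ∑ p ∈ univ.offDiag, midpoint ℝ (x p.1) (x p.2)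
      = (Fintype.card ι - 1 : ℝ) • ∑ i, x i := by
    have hprod : ∑ p ∈ univ ×ˢ univ, midpoint ℝ (x p.1) (x p.2)
        = (Fintype.card ι : ℝ) • ∑ i, x i := by
      simp only [sum_product, midpoint_eq_smul_add, invOf_eq_inv, ← smul_sum, sum_add_distrib,
        sum_const, card_univ, Nat.cast_smul_eq_nsmul]
      module
    rw [← diag_union_offDiag, sum_union (disjoint_diag_offDiag _), sum_diag] at hprod
    simp only [midpoint_self] at hprod
    rw [sub_smul, one_smul, ← hprod, add_sub_cancel_left]
  have htwice := sum_offDiag_sym2_mk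
    (Sym2.lift ⟨fun i j => midpoint ℝ (x i) (x j), fun i j => midpoint_comm (x i) (x j)⟩)
  simp only [Sym2.lift_mk] at htwice
  change _ = 2 • ∑ e, pairMidpoints V x e at htwice
  rw [hoff, two_nsmul, ← two_smul ℝ] at htwice
  rw [div_eq_inv_mul, mul_smul, htwice, smul_smul, inv_mul_cancel₀ two_ne_zero, one_smul]

theorem sum_eq_of_pairMidpoints_eq_comp (hι : 2 ≤ Fintype.card ι)
    (φ : Equiv.Perm {e : Sym2 ι // ¬e.IsDiag}) {x y : ι → V}
    (h : pairMidpoints V y = pairMidpoints V x ∘ φ) : ∑ i, y i = ∑ i, x i := by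
  have hc : ((Fintype.card ι - 1 : ℝ) / 2) ≠ 0 := by
    have : (2 : ℝ) ≤ Fintype.card ι := by exact_mod_cast hι
    exact div_ne_zero (by linarith) two_ne_zero
  apply smul_right_injective V hc
  simp only [← sum_pairMidpoints, h, Function.comp_apply, Equiv.sum_comp]

end PairMidpoints

theorem exists_eq_single_of_add_eq_zero_or_one {ι : Type*} [Fintype ι] [DecidableEq ι]
    (hι : 5 ≤ Fintype.card ι) {t : ι → ℝ}
    (hpair : ∀ i j, i ≠ j → t i + t j = 0 ∨ t i + t j = 1) (hsum : ∑ i, t i = 1) :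
    ∃ i₀, t = Pi.single i₀ 1 := by
  have hcard : (5 : ℝ) ≤ Fintype.card ι := by exact_mod_cast hι
  have hnonneg (i : ι) : 0 ≤ t i := by
    have hrow : 0 ≤ ∑ j ∈ univ.erase i, (t i + t j) :=
      sum_nonneg fun j hj => by rcases hpair i j (ne_of_mem_erase hj).symm with h | h <;> linarith
    rw [sum_erase_eq_sub (mem_univ i), sum_add_distrib, sum_const, card_univ, hsum,
      nsmul_eq_mul] at hrow
    by_contra! hneg
    have hlower : -1 ≤ 3 * t i := by nlinarith
    -- `2 * t i = (t i + t j) + (t i + t k) - (t j + t k)` is an integer, yet in `[-2/3, 0)`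
    obtain ⟨j, hji, -⟩ := Fintype.exists_ne_ne (by omega) i i
    obtain ⟨k, hki, hkj⟩ := Fintype.exists_ne_ne (by omega) i j
    rcases hpair i j hji.symm with h₁ | h₁ <;> rcases hpair i k hki.symm with h₂ | h₂ <;>
      rcases hpair j k hkj.symm with h₃ | h₃ <;> linarith
  obtain ⟨i₀, hi₀⟩ : ∃ i₀, 0 < t i₀ := by
    by_contra! h
    linarith [sum_nonpos (s := univ) fun i _ => h i]
  have hother (j : ι) (hj : j ≠ i₀) : t j = 1 - t i₀ := by
    rcases hpair j i₀ hj with h | h <;> linarith [hnonneg j]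
  have hone : t i₀ = 1 := by
    have hdev : ∑ j, (t j - (1 - t i₀)) = t i₀ - (1 - t i₀) :=
      sum_eq_single i₀ (fun j _ hj => by rw [hother j hj, sub_self]) (by simp)
    rw [sum_sub_distrib, hsum, sum_const, card_univ, nsmul_eq_mul] at hdev
    nlinarith
  refine ⟨i₀, funext fun j => ?_⟩
  rcases eq_or_ne j i₀ with rfl | hj
  · simp [hone]
  · simp [hj, hother j hj, hone]

section Rigidity

variable {ι : Type*} [Fintype ι] [DecidableEq ι]

theorem exists_mem_iff_of_pairMidpoints_eq_comp (hι : 5 ≤ Fintype.card ι)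
    (φ : Equiv.Perm {e : Sym2 ι // ¬e.IsDiag}) (k : ι) {t : ι → ℝ}
    (ht : pairMidpoints ℝ t = pairMidpoints ℝ (Pi.single k 1) ∘ φ) :
    ∃ a, ∀ e, a ∈ e.1 ↔ k ∈ (φ e).1 := by
  have hpair (i j : ι) (hij : i ≠ j) : t i + t j = 0 ∨ t i + t j = 1 := by
    have h := congrFun ht ⟨s(i, j), by simpa using hij⟩
    rw [pairMidpoints_mk, Function.comp_apply, pairMidpoints_single_one,
      midpoint_eq_smul_add, smul_eq_mul, invOf_eq_inv] at h
    split_ifs at h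
    · right; linarith
    · left; linarith
  have hsum : ∑ i, t i = 1 := by
    rw [sum_eq_of_pairMidpoints_eq_comp (by omega) φ ht, sum_pi_single']
    simp
  obtain ⟨a, rfl⟩ := exists_eq_single_of_add_eq_zero_or_one hι hpair hsum
  refine ⟨a, fun e => ?_⟩
  have h := congrFun ht e
  rw [Function.comp_apply, pairMidpoints_single_one, pairMidpoints_single_one] at h
  split_ifs at h <;> simp_all

theorem exists_perm_of_forall_exists_pairMidpoints_eq_comp (hι : 5 ≤ Fintype.card ι)
    (φ : Equiv.Perm {e : Sym2 ι // ¬e.IsDiag})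
    (h : ∀ k, ∃ t : ι → ℝ,
      pairMidpoints ℝ t = pairMidpoints ℝ (Pi.single k 1) ∘ φ) :
    ∃ σ : Equiv.Perm ι, ∀ e, (φ e).1 = e.1.map σ := by
  choose ρ hρ using fun k =>
    (h k).elim fun _ ht => exists_mem_iff_of_pairMidpoints_eq_comp hι φ k ht
  have hinj : Function.Injective ρ := by
    intro k k' hkk'
    obtain ⟨l, hlk, hlk'⟩ := Fintype.exists_ne_ne (by omega) k k'
    have hkl : ¬s(k, l).IsDiag := by simpa using hlk.symm
    have := (hρ k' (φ.symm ⟨s(k, l), hkl⟩)).1 (hkk' ▸ (hρ k _).2 (by simp))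
    simp only [Equiv.apply_symm_apply, Sym2.mem_iff] at this
    exact (this.resolve_right fun h => hlk' h.symm).symm
  let ρ' := Equiv.ofBijective ρ hinj.bijective_of_finite
  refine ⟨ρ'.symm, fun e => Sym2.ext fun k => ?_⟩
  rw [← hρ, Sym2.mem_map]
  constructor
  · exact fun hk => ⟨ρ k, hk, ρ'.symm_apply_apply k⟩
  · rintro ⟨a, ha, rfl⟩
    change ρ' (ρ'.symm a) ∈ e.1
    rwa [Equiv.apply_symm_apply]

end Rigidity

section RelabelSubspace

variable {ι V : Type*} [AddCommGroup V] [Module ℝ V]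

variable (V) in
noncomputable def relabelSubspace (φ : Equiv.Perm {e : Sym2 ι // ¬e.IsDiag}) :
    Submodule ℝ (ι → V) :=
  (LinearMap.range (pairMidpoints V)).comap (LinearMap.funLeft ℝ V φ ∘ₗ pairMidpoints V)

theorem mem_relabelSubspace {φ : Equiv.Perm {e : Sym2 ι // ¬e.IsDiag}} {x : ι → V} :
    x ∈ relabelSubspace V φ ↔ ∃ y, pairMidpoints V y = pairMidpoints V x ∘ φ := by
  simp [relabelSubspace, LinearMap.funLeft]

variable [Fintype ι] [DecidableEq ι]

theorem exists_perm_of_relabelSubspace_eq_top [Nontrivial V] (hι : 5 ≤ Fintype.card ι)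
    {φ : Equiv.Perm {e : Sym2 ι // ¬e.IsDiag}} (h : relabelSubspace V φ = ⊤) :
    ∃ σ : Equiv.Perm ι, ∀ e, (φ e).1 = e.1.map σ := by
  obtain ⟨v, hv⟩ := exists_ne (0 : V)
  obtain ⟨f, hf⟩ := Module.Projective.exists_dual_eq_one ℝ hv
  refine exists_perm_of_forall_exists_pairMidpoints_eq_comp hι φ fun k => ?_
  obtain ⟨y, hy⟩ := mem_relabelSubspace.1 (h ▸ Submodule.mem_top : Pi.single k v ∈ _)
  have hfv : f ∘ Pi.single k v = Pi.single k 1 := by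
    funext i
    rcases eq_or_ne i k with rfl | hik <;> simp [*]
  refine ⟨f ∘ y, ?_⟩
  rw [pairMidpoints_comp_linearMap, hy, ← hfv, pairMidpoints_comp_linearMap]
  rfl

theorem eq_comp_of_pairMidpoints_eq_comp (hι : 3 ≤ Fintype.card ι)
    {φ : Equiv.Perm {e : Sym2 ι // ¬e.IsDiag}} {σ : Equiv.Perm ι}
    (hσ : ∀ e, (φ e).1 = e.1.map σ) {x y : ι → V}
    (h : pairMidpoints V y = pairMidpoints V x ∘ φ) : y = x ∘ σ := by
  refine pairMidpoints_injective hι (funext fun ⟨e, he⟩ => ?_)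
  induction e using Sym2.ind with
  | _ i j =>
    have hφ : φ ⟨s(i, j), he⟩ = ⟨s(σ i, σ j), by simpa using he⟩ := Subtype.ext (hσ _)
    rw [congrFun h, Function.comp_apply, hφ]
    rfl

end RelabelSubspace

theorem exists_perm_pairMidpoints_eq_comp_of_pairwiseMidpoints_eq {V : Type*} [AddCommGroup V]
    [Module ℝ V] {m : ℕ} {x y : Fin m → V} (h : pairwiseMidpoints y = pairwiseMidpoints x) :
    ∃ φ : Equiv.Perm {e : Sym2 (Fin m) // ¬e.IsDiag},
      pairMidpoints V y = pairMidpoints V x ∘ φ := by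
  classical
  rw [pairwiseMidpoints_eq_map, pairwiseMidpoints_eq_map] at h
  exact Equiv.Perm.exists_comp_eq_of_map_univ_eq h

theorem MeasureTheory.Measure.AbsolutelyContinuous.pi : ∀ {k : ℕ} {α : Fin k → Type*}
    [∀ i, MeasurableSpace (α i)] {μ ν : ∀ i, Measure (α i)} [∀ i, SigmaFinite (μ i)]
    [∀ i, SigmaFinite (ν i)], (∀ i, μ i ≪ ν i) → Measure.pi μ ≪ Measure.pi ν
  | 0, _, _, μ, ν, _, _, _ => by rw [Measure.pi_of_empty μ, Measure.pi_of_empty ν]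
  | _ + 1, _, _, μ, ν, _, _, h => by
    rw [← ((measurePreserving_piFinSuccAbove μ 0).symm _).map_eq,
      ← ((measurePreserving_piFinSuccAbove ν 0).symm _).map_eq]
    exact ((h 0).prod (pi fun j => h _)).map (MeasurableEquiv.measurable _)

/-- The set of tuples of `m ≥ 6` points in `ℝ^n` that are not determined, up to reordering,
by their pairwise midpoints is contained in a Lebesgue-null set; consequently, points drawn
i.i.d. from any distribution absolutely continuous w.r.t. Lebesgue measure are, with
probability 1, uniquely determined up to order by their pairwise midpoints. -/
theorem midpoint_recovery (n m : ℕ) (hn : 1 ≤ n) (hm : 6 ≤ m) :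
    ∃ Z : Set (Fin m → EuclideanSpace ℝ (Fin n)),
      volume Z = 0 ∧
      {x : Fin m → EuclideanSpace ℝ (Fin n) |
          ∃ y : Fin m → EuclideanSpace ℝ (Fin n),
            pairwiseMidpoints y = pairwiseMidpoints x ∧
            ¬∃ σ : Equiv.Perm (Fin m), ∀ i, y i = x (σ i)} ⊆ Z ∧
      ∀ μ : Measure (EuclideanSpace ℝ (Fin n)), IsProbabilityMeasure μ → μ ≪ volume →
        Measure.pi (fun _ : Fin m => μ) Z = 0 := by
  have : NeZero n := ⟨by omega⟩
  set E := EuclideanSpace ℝ (Fin n)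
  let Z := ⋃ (φ : Equiv.Perm {e : Sym2 (Fin m) // ¬e.IsDiag})
    (_ : relabelSubspace E φ ≠ ⊤), (relabelSubspace E φ : Set (Fin m → E))
  have hZ : volume Z = 0 :=
    measure_iUnion_null fun φ => measure_iUnion_null (Measure.addHaar_submodule _ _)
  refine ⟨Z, hZ, ?_, fun μ _ hμ => Measure.AbsolutelyContinuous.pi (fun _ => hμ) hZ⟩
  rintro x ⟨y, hxy, hy⟩
  obtain ⟨φ, hφ⟩ := exists_perm_pairMidpoints_eq_comp_of_pairwiseMidpoints_eq hxy
  refine Set.mem_iUnion₂.2 ⟨φ, fun htop => hy ?_, mem_relabelSubspace.2 ⟨y, hφ⟩⟩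
  have hcard : 5 ≤ Fintype.card (Fin m) := by rw [Fintype.card_fin]; omega
  obtain ⟨σ, hσ⟩ := exists_perm_of_relabelSubspace_eq_top hcard htop
  exact ⟨σ, congrFun (eq_comp_of_pairMidpoints_eq_comp (by omega) hσ hφ)⟩
end

section
/- Let m > 6 and let D be a set of exactly m−1 unordered pairs of distinct elements of {1, …, m} (i.e., m−1 edges of the complete graph K_m) such that D is not the star of any vertex (there is no v with D = {{v, w} : w ∈ {1,…,m}, w ≠ v}). Then the vectors e_i + e_j ∈ ℝ^m, over all unordered pairs {i, j} with i ≠ j and {i, j} ∉ D, span ℝ^m (where e_1, …, e_m is the standard basis of ℝ^m). -/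
/-!
If `G` is connected and contains a triangle `xyz`, the vectors `e_i + e_j` over the edges of `G`
span `K^V` whenever `2` is invertible in `K`: `2 e_x = (e_x + e_y) + (e_x + e_z) - (e_y + e_z)`,
and `e_v`, `e_v + e_w` give `e_w` along every edge `vw`.

Removing a set `D` of `n - 1` edges from `K_n` leaves a connected graph unless `D` contains every
edge across some cut `T | Tᶜ`; then `#T * #Tᶜ ≤ n - 1 < #T + #Tᶜ` forces one side to be a single
vertex, whose `n - 1` edges make up all of `D`. A triangle survives by Mantel's theorem, since
`4 (C(n, 2) - (n - 1)) > n²` for `n ≥ 6`.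
-/

open Finset

namespace SimpleGraph

variable {V K : Type*} {G : SimpleGraph V}

lemma CliqueFree.four_mul_card_edgeFinset_le [Fintype V] [DecidableRel G.Adj]
    (h : G.CliqueFree 3) : 4 * #G.edgeFinset ≤ Fintype.card V ^ 2 := by
  have := h.card_edgeFinset_le (r := 2)
  simp only at this
  rw [Nat.choose_eq_zero_of_lt (Nat.mod_lt _ two_pos)] at this
  omega

section EdgeVectorSpan

variable [DecidableEq V]

def edgeVectorSpan (G : SimpleGraph V) (K : Type*) [Semiring K] : Submodule K (V → K) :=
  Submodule.span K {u | ∃ i j, G.Adj i j ∧ u = Pi.single i 1 + Pi.single j 1}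

section Ring

variable [Ring K]

lemma add_single_mem_edgeVectorSpan {i j : V} (h : G.Adj i j) :
    (Pi.single i 1 + Pi.single j 1 : V → K) ∈ G.edgeVectorSpan K :=
  Submodule.subset_span ⟨i, j, h, rfl⟩

lemma Adj.single_mem_edgeVectorSpan {x y : V} (h : G.Adj x y)
    (hx : (Pi.single x 1 : V → K) ∈ G.edgeVectorSpan K) :
    (Pi.single y 1 : V → K) ∈ G.edgeVectorSpan K := by
  simpa using Submodule.sub_mem _ (add_single_mem_edgeVectorSpan h) hx

lemma Reachable.single_mem_edgeVectorSpan {x y : V} (h : G.Reachable x y)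
    (hx : (Pi.single x 1 : V → K) ∈ G.edgeVectorSpan K) :
    (Pi.single y 1 : V → K) ∈ G.edgeVectorSpan K := by
  obtain ⟨p⟩ := h
  induction p with
  | nil => exact hx
  | cons hadj _ ih => exact ih (hadj.single_mem_edgeVectorSpan hx)

end Ring

variable [DivisionRing K] [NeZero (2 : K)]

lemma single_mem_edgeVectorSpan_of_adj_of_adj_of_adj {x y z : V} (hxy : G.Adj x y)
    (hxz : G.Adj x z) (hyz : G.Adj y z) : (Pi.single x 1 : V → K) ∈ G.edgeVectorSpan K := by
  have hx : (Pi.single x 1 : V → K) = (2 : K)⁻¹ • ((Pi.single x 1 + Pi.single y 1) +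
      (Pi.single x 1 + Pi.single z 1) - (Pi.single y 1 + Pi.single z 1)) := by
    rw [add_add_add_comm, add_sub_cancel_right, ← two_smul K, smul_smul,
      inv_mul_cancel₀ two_ne_zero, one_smul]
  rw [hx]
  exact Submodule.smul_mem _ _ <| Submodule.sub_mem _
    (Submodule.add_mem _ (add_single_mem_edgeVectorSpan hxy) (add_single_mem_edgeVectorSpan hxz))
    (add_single_mem_edgeVectorSpan hyz)

lemma Connected.edgeVectorSpan_eq_top [Finite V] (hG : G.Connected) (hG3 : ¬G.CliqueFree 3) :
    G.edgeVectorSpan K = ⊤ := by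
  obtain ⟨s, hs⟩ := not_forall_not.1 hG3
  obtain ⟨x, y, z, hxy, hxz, hyz, -⟩ := is3Clique_iff.1 hs
  have hx := single_mem_edgeVectorSpan_of_adj_of_adj_of_adj (K := K) hxy hxz hyz
  rw [eq_top_iff, ← (Pi.basisFun K V).span_eq, Submodule.span_le]
  rintro _ ⟨w, rfl⟩
  simpa using (hG.preconnected x w).single_mem_edgeVectorSpan hx

end EdgeVectorSpan

section DeleteEdges

variable [Fintype V] [DecidableEq V] {D : Finset (Sym2 V)}

lemma card_mul_card_compl_le_of_forall_mk_mem {T : Finset V}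
    (hcut : ∀ x ∈ T, ∀ y ∉ T, s(x, y) ∈ D) : #T * #Tᶜ ≤ #D := by
  rw [← card_product]
  refine card_le_card_of_injOn (fun q => s(q.1, q.2)) ?_ ?_
  · rintro ⟨x, y⟩ hq
    simp only [coe_product, Set.mem_prod, mem_coe, mem_compl] at hq
    exact hcut x hq.1 y hq.2
  · rintro ⟨x, y⟩ hq ⟨x', y'⟩ hq' h
    simp only [coe_product, Set.mem_prod, mem_coe, mem_compl] at hq hq'
    rcases Sym2.eq_iff.1 h with ⟨rfl, rfl⟩ | ⟨rfl, rfl⟩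
    · rfl
    · exact absurd hq.1 hq'.2

lemma eq_incidenceFinset_top_of_forall_mk_mem {v : V} (hv : ∀ w ≠ v, s(v, w) ∈ D)
    (hD : #D ≤ Fintype.card V - 1) : D = (⊤ : SimpleGraph V).incidenceFinset v := by
  refine (eq_of_subset_of_card_le (fun e he => ?_) ?_).symm
  · rw [mem_incidenceFinset] at he
    obtain ⟨w, rfl⟩ := Sym2.mem_iff_exists.1 he.2
    exact hv w ((mem_incidenceSet _ _ _).1 he).ne'
  · rwa [card_incidenceFinset_eq_degree, complete_graph_degree]

lemma exists_eq_incidenceFinset_top_of_forall_mk_mem {T : Finset V} (hT : T.Nonempty)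
    (hTc : Tᶜ.Nonempty) (hcut : ∀ x ∈ T, ∀ y ∉ T, s(x, y) ∈ D)
    (hD : #D ≤ Fintype.card V - 1) : ∃ v, D = (⊤ : SimpleGraph V).incidenceFinset v := by
  have hsum := card_add_card_compl T
  have hprod := card_mul_card_compl_le_of_forall_mk_mem hcut
  have hone : #T = 1 ∨ #Tᶜ = 1 := by
    by_contra! h
    have ha : 2 ≤ #T := by have := hT.card_pos; omega
    have hb : 2 ≤ #Tᶜ := by have := hTc.card_pos; omega
    have : #D + 1 ≤ #T + #Tᶜ := by omega
    nlinarith [Nat.mul_le_mul ha hb]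
  rcases hone with hone | hone
  · obtain ⟨v, rfl⟩ := card_eq_one.1 hone
    exact ⟨v, eq_incidenceFinset_top_of_forall_mk_mem
      (fun w hw => hcut v (mem_singleton_self v) w (by simpa using hw)) hD⟩
  · obtain ⟨v, hv⟩ := card_eq_one.1 hone
    refine ⟨v, eq_incidenceFinset_top_of_forall_mk_mem (fun w hw => ?_) hD⟩
    have hwT : w ∈ T := by
      by_contra hwT
      exact hw (by simpa [hv] using mem_compl.2 hwT)
    rw [Sym2.eq_swap]
    exact hcut w hwT v (by simp [← mem_compl, hv])

lemma connected_top_deleteEdges [Nonempty V] (hD : #D ≤ Fintype.card V - 1)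
    (hstar : ∀ v, D ≠ (⊤ : SimpleGraph V).incidenceFinset v) :
    ((⊤ : SimpleGraph V).deleteEdges D).Connected := by
  classical
  refine (connected_iff _).2 ⟨fun u w => ?_, inferInstance⟩
  by_contra huw
  set T := univ.filter (((⊤ : SimpleGraph V).deleteEdges D).Reachable u)
  have hcut : ∀ x ∈ T, ∀ y ∉ T, s(x, y) ∈ D := by
    intro x hx y hy
    by_contra hxy
    simp only [T, mem_filter, mem_univ, true_and] at hx hy
    have hne : x ≠ y := fun h => hy (h ▸ hx)
    exact hy (hx.trans (Adj.reachable (by simp [hne, hxy])))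
  obtain ⟨v, hv⟩ := exists_eq_incidenceFinset_top_of_forall_mk_mem
    ⟨u, by simp [T]⟩ ⟨w, by simp [T, huw]⟩ hcut hD
  exact hstar v hv

lemma not_cliqueFree_three_top_deleteEdges (hn : 6 ≤ Fintype.card V)
    (hD : #D ≤ Fintype.card V - 1) : ¬((⊤ : SimpleGraph V).deleteEdges D).CliqueFree 3 := by
  classical
  intro h
  have hmantel := h.four_mul_card_edgeFinset_le
  have hedges : #(⊤ : SimpleGraph V).edgeFinset - #D ≤
      #((⊤ : SimpleGraph V).deleteEdges D).edgeFinset := by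
    rw [edgeFinset_deleteEdges]
    exact le_card_sdiff _ _
  rw [card_edgeFinset_top_eq_card_choose_two, Nat.choose_two_right] at hedges
  set n := Fintype.card V
  have hsq : n * (n - 1) + n = n ^ 2 := by cases n <;> simp; ring
  have hsix : 6 * n ≤ n ^ 2 := by nlinarith
  omega

end DeleteEdges

end SimpleGraph

open SimpleGraph in
theorem remaining_edges_span_general (m : ℕ) (hm : 6 < m) (D : Finset (Sym2 (Fin m)))
    (hcard : D.card = m - 1)
    (hstar : ¬∃ v : Fin m, ∀ p : Sym2 (Fin m), p ∈ D ↔ (¬p.IsDiag ∧ v ∈ p)) :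
    Submodule.span ℝ {u : Fin m → ℝ | ∃ i j : Fin m, i ≠ j ∧ s(i, j) ∉ D ∧
      u = Pi.single i 1 + Pi.single j 1} = ⊤ := by
  have : Nonempty (Fin m) := ⟨⟨0, by omega⟩⟩
  have hD : #D ≤ Fintype.card (Fin m) - 1 := by simp [hcard]
  have hnotstar : ∀ v, D ≠ (⊤ : SimpleGraph (Fin m)).incidenceFinset v := by
    rintro v rfl
    exact hstar ⟨v, fun p => by simp [mem_incidenceFinset, incidenceSet]⟩
  have hspan := (connected_top_deleteEdges hD hnotstar).edgeVectorSpan_eq_top (K := ℝ)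
    (not_cliqueFree_three_top_deleteEdges (by simp; omega) hD)
  simpa [edgeVectorSpan, and_assoc] using hspan

/-- Claim 2 of the paper's midpoint-recovery lemma: for `m > 6`, after deleting any set
`D` of `m - 1` edges of the complete graph `K_m` that is not a full vertex star, the
incidence vectors `e_i + e_j` of the remaining edges still span `ℝ^m`. -/
theorem remaining_edges_span (m : ℕ) (hm : 6 < m) (D : Finset (Sym2 (Fin m)))
    (hDedges : ∀ p ∈ D, ¬p.IsDiag) (hcard : D.card = m - 1)
    (hstar : ¬∃ v : Fin m, ∀ p : Sym2 (Fin m), p ∈ D ↔ (¬p.IsDiag ∧ v ∈ p)) :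
    Submodule.span ℝ {u : Fin m → ℝ | ∃ i j : Fin m, i ≠ j ∧ s(i, j) ∉ D ∧
      u = Pi.single i 1 + Pi.single j 1} = ⊤ :=
  remaining_edges_span_general m hm D hcard hstar
end

section
/- Let m > 6 and let A be the Mixup matrix. Let π be a bijection of the row index set and let PA denote the row-permuted matrix (PA)_{r,k} = A_{π(r),k}. Suppose there is no permutation σ of the columns {1, …, m} with (PA)_{r,k} = A_{r,σ(k)} for all r, k. Then there exists a set I of m−1 row indices such that the submatrix of A formed by the rows in I has some column all of whose entries equal 1, while no column of the submatrix of PA formed by the rows in I has all entries equal to 1. -/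
/-- Row index set of the Mixup matrix: unordered pairs of distinct elements of `{1, …, m}`. -/
abbrev PairIdx (m : ℕ) := {p : Sym2 (Fin m) // ¬p.IsDiag}

/-- The Mixup matrix: rows indexed by unordered pairs `{i, j}` of distinct indices,
columns by `{1, …, m}`, with entry `1` iff the column index belongs to the pair. -/
def mixupMatrix (m : ℕ) : Matrix (PairIdx m) (Fin m) ℝ :=
  fun r k => if k ∈ r.1 then 1 else 0

/-- The "star" of a column `c`: the set of rows (pairs) containing `c`. -/
def mixupStar (m : ℕ) (c : Fin m) : Finset (PairIdx m) :=
  Finset.univ.filter (fun r => c ∈ r.1)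

lemma mem_mixupStar {m : ℕ} {c : Fin m} {r : PairIdx m} :
    r ∈ mixupStar m c ↔ c ∈ r.1 := by
  simp [mixupStar]

lemma mixup_eq_one_iff {m : ℕ} {r : PairIdx m} {k : Fin m} :
    mixupMatrix m r k = 1 ↔ k ∈ r.1 := by
  simp only [mixupMatrix]
  split_ifs with h <;> simp [h]

lemma card_mixupStar {m : ℕ} (c : Fin m) : (mixupStar m c).card = m - 1 := by
  have h : (mixupStar m c).card = (Finset.univ.erase c).card := by
    apply Finset.card_bij (fun r hr => Sym2.Mem.other' (mem_mixupStar.mp hr))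
    · intro r hr
      have h := mem_mixupStar.mp hr
      have hne : Sym2.Mem.other' h ≠ c := by
        intro he
        apply r.2
        rw [← Sym2.other_spec' h, he]
        exact Sym2.mk_isDiag_iff.mpr rfl
      simp [hne]
    · intro r hr r' hr' heq
      have h := mem_mixupStar.mp hr
      have h' := mem_mixupStar.mp hr'
      apply Subtype.ext
      rw [← Sym2.other_spec' h, ← Sym2.other_spec' h', heq]
    · intro j hj
      have hj' : j ≠ c := Finset.ne_of_mem_erase hj
      have hcj : ¬ (s(c, j) : Sym2 (Fin m)).IsDiag := by
        simp only [Sym2.mk_isDiag_iff]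
        exact hj'.symm
      refine ⟨⟨s(c, j), hcj⟩, mem_mixupStar.mpr (by simp), ?_⟩
      have hmem : c ∈ ((⟨s(c, j), hcj⟩ : PairIdx m) : Sym2 (Fin m)) := by simp
      have := Sym2.other_spec' (mem_mixupStar.mp (mem_mixupStar.mpr hmem))
      exact Sym2.congr_right.mp this
  rw [h, Finset.card_erase_of_mem (Finset.mem_univ c)]
  simp

lemma mixupStar_injective {m : ℕ} (hm : 3 ≤ m) :
    Function.Injective (mixupStar m) := by
  intro c c' h
  by_contra hne
  obtain ⟨j, hj⟩ : ∃ j : Fin m, j ≠ c ∧ j ≠ c' := by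
    have hcard : (({c, c'} : Finset (Fin m))ᶜ).Nonempty := by
      rw [← Finset.card_pos, Finset.card_compl]
      have h2 : ({c, c'} : Finset (Fin m)).card ≤ 2 :=
        (Finset.card_insert_le _ _).trans (by simp)
      have : Fintype.card (Fin m) = m := Fintype.card_fin m
      omega
    obtain ⟨j, hj⟩ := hcard
    simp only [Finset.mem_compl, Finset.mem_insert, Finset.mem_singleton, not_or] at hj
    exact ⟨j, hj.1, hj.2⟩
  have hcj : ¬ (s(c, j) : Sym2 (Fin m)).IsDiag := by
    simp only [Sym2.mk_isDiag_iff]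
    exact hj.1.symm
  have hmem : (⟨s(c, j), hcj⟩ : PairIdx m) ∈ mixupStar m c := mem_mixupStar.mpr (by simp)
  rw [h] at hmem
  have := mem_mixupStar.mp hmem
  rw [Sym2.mem_iff] at this
  rcases this with h1 | h1
  · exact hne h1.symm
  · exact hj.2 h1.symm

/-- Claim 1 of the paper's midpoint-recovery lemma: if a row permutation `PA` of the Mixup
matrix `A` is not a column permutation of `A`, then there is a set `I` of `m - 1` rows such
that the corresponding submatrix of `A` has an all-ones column, while no column of the
corresponding submatrix of `PA` is all ones. -/
theorem mixup_matrix_allones_rows (m : ℕ) (hm : 6 < m) (π : Equiv.Perm (PairIdx m))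
    (hnoperm : ¬∃ σ : Equiv.Perm (Fin m),
      ∀ (r : PairIdx m) (k : Fin m), mixupMatrix m (π r) k = mixupMatrix m r (σ k)) :
    ∃ I : Finset (PairIdx m), I.card = m - 1 ∧
      (∃ c : Fin m, ∀ r ∈ I, mixupMatrix m r c = 1) ∧
      (∀ c : Fin m, ∃ r ∈ I, mixupMatrix m (π r) c ≠ 1) := by
  by_contra hcon
  push_neg at hcon
  apply hnoperm
  have key : ∀ c : Fin m, ∃ c', (mixupStar m c).image π = mixupStar m c' := by
    intro c
    obtain ⟨c', hc'⟩ := hcon (mixupStar m c) (card_mixupStar c)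
      ⟨c, fun r hr => mixup_eq_one_iff.mpr (mem_mixupStar.mp hr)⟩
    refine ⟨c', Finset.eq_of_subset_of_card_le ?_ ?_⟩
    · intro x hx
      obtain ⟨r, hr, rfl⟩ := Finset.mem_image.mp hx
      exact mem_mixupStar.mpr (mixup_eq_one_iff.mp (hc' r hr))
    · rw [Finset.card_image_of_injective _ π.injective, card_mixupStar, card_mixupStar]
  choose τ hτ using key
  have hinj : Function.Injective τ := by
    intro a b hab
    apply mixupStar_injective (by omega)
    apply Finset.image_injective (f := π) π.injective
    rw [hτ, hτ, hab]
  let e : Equiv.Perm (Fin m) := Equiv.ofBijective τ (Finite.injective_iff_bijective.mp hinj)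
  refine ⟨e.symm, fun r k => ?_⟩
  have hmem : ∀ c ∈ r.1, τ c ∈ (π r).1 := by
    intro c hc
    have h : π r ∈ (mixupStar m c).image π :=
      Finset.mem_image_of_mem π (mem_mixupStar.mpr hc)
    rw [hτ] at h
    exact mem_mixupStar.mp h
  obtain ⟨i, j, hij, hr⟩ : ∃ i j : Fin m, i ≠ j ∧ r.1 = s(i, j) := by
    obtain ⟨p, hp⟩ := r
    induction p using Sym2.ind with
    | _ i j => exact ⟨i, j, by simpa [Sym2.mk_isDiag_iff] using hp, rfl⟩
  have h1 : τ i ∈ (π r).1 := hmem i (by rw [hr]; simp)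
  have h2 : τ j ∈ (π r).1 := hmem j (by rw [hr]; simp)
  have hne : τ i ≠ τ j := fun h => hij (hinj h)
  have hπr : (π r).1 = s(τ i, τ j) := (Sym2.mem_and_mem_iff hne).mp ⟨h1, h2⟩
  have hcond : (k = τ i ∨ k = τ j) ↔ (e.symm k = i ∨ e.symm k = j) := by
    have hτe : ∀ a, (k = τ a ↔ e.symm k = a) := by
      intro a
      rw [Equiv.symm_apply_eq]
      exact ⟨fun h => h, fun h => h⟩
    rw [hτe i, hτe j]
  simp only [mixupMatrix, hπr, hr, Sym2.mem_iff]
  rw [if_congr hcond rfl rfl]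
end

section
/- Let d ≥ 2, let μ be a probability measure on ℝ whose topological support equals [0,1], and let x, z ∈ ℝ^d be linearly independent. Then the two-point Mixup loss g is strictly convex on the linear span of {x, z}: for all θ₁ ≠ θ₂ in span{x, z} and all a ∈ (0,1), g(aθ₁ + (1−a)θ₂) < a·g(θ₁) + (1−a)·g(θ₂). -/
open MeasureTheory
open scoped RealInnerProductSpace

/-- The logistic loss `ℓ(u) = log(1 + exp(-u))`. -/
noncomputable def logisticLoss (u : ℝ) : ℝ := Real.log (1 + Real.exp (-u))

/-- The two-point Mixup (logistic) loss for a linear classifier `θ`, where `x` has label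
`+1` and `z` has label `-1`:
`g(θ) = ∫ [λ ℓ(⟪θ, λx+(1-λ)z⟫) + (1-λ) ℓ(-⟪θ, λx+(1-λ)z⟫)] dμ(λ)`. -/
noncomputable def twoPointMixupLoss {d : ℕ} (μ : Measure ℝ)
    (x z θ : EuclideanSpace ℝ (Fin d)) : ℝ :=
  ∫ l, (l * logisticLoss ⟪θ, l • x + (1 - l) • z⟫ +
    (1 - l) * logisticLoss (-⟪θ, l • x + (1 - l) • z⟫)) ∂μ

/-! Since `ℓ(-u) = ℓ(u) + u`, the Mixup integrand at `λ` is `ℓ(⟪θ, v_λ⟫)` plus a term linear in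
`θ`, where `v_λ = λx + (1-λ)z`; hence it is strictly convex along every direction `w` with
`⟪w, v_λ⟫ ≠ 0`. A nonzero `w ∈ span {x, z}` cannot be orthogonal to both `v₁ = x` and `v₀ = z`,
so this holds for `λ` in an open neighbourhood of `1` or of `0`, which has positive `μ`-measure
because `μ` has support `[0, 1]`. -/

open Set

@[fun_prop]
lemma continuous_logisticLoss : Continuous logisticLoss :=
  Continuous.log (by fun_prop) fun u => by positivity

lemma logisticLoss_neg (u : ℝ) : logisticLoss (-u) = logisticLoss u + u := by
  have h : 1 + Real.exp u = Real.exp u * (1 + Real.exp (-u)) := by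
    rw [mul_add, mul_one, ← Real.exp_add, add_neg_cancel, Real.exp_zero, add_comm]
  rw [logisticLoss, logisticLoss, neg_neg, h, Real.log_mul (Real.exp_ne_zero u) (by positivity),
    Real.log_exp, add_comm]

lemma hasDerivAt_logisticLoss (u : ℝ) :
    HasDerivAt logisticLoss (-(1 + Real.exp u)⁻¹) u := by
  have h : HasDerivAt logisticLoss (Real.exp (-u) * -1 / (1 + Real.exp (-u))) u :=
    (((Real.hasDerivAt_exp (-u)).comp u (hasDerivAt_neg u)).const_add 1).log
      (add_pos one_pos (Real.exp_pos _)).ne'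
  convert h using 1
  rw [Real.exp_neg]
  field_simp
  ring

lemma strictConvexOn_logisticLoss : StrictConvexOn ℝ univ logisticLoss := by
  refine StrictMono.strictConvexOn_univ_of_deriv continuous_logisticLoss ?_
  rw [funext fun u => (hasDerivAt_logisticLoss u).deriv]
  intro u v huv
  have : 1 + Real.exp u < 1 + Real.exp v := by gcongr
  exact neg_lt_neg (inv_strictAnti₀ (by positivity) this)

lemma strictConvexOn_mixup_logisticLoss (l : ℝ) :
    StrictConvexOn ℝ univ fun u => l * logisticLoss u + (1 - l) * logisticLoss (-u) := by
  have h : (fun u => l * logisticLoss u + (1 - l) * logisticLoss (-u)) =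
      fun u => logisticLoss u + (1 - l) * u := by
    funext u
    rw [logisticLoss_neg]
    ring
  rw [h]
  exact strictConvexOn_logisticLoss.add_convexOn
    ((LinearMap.mulLeft ℝ (1 - l)).convexOn convex_univ)

theorem strictConvexOn_integral_comp_inner {α E : Type*} [MeasurableSpace α]
    [NormedAddCommGroup E] [InnerProductSpace ℝ E] {μ : Measure α} {ψ : α → ℝ → ℝ} {v : α → E}
    {s : Set E} (hs : Convex ℝ s) (hψ : ∀ l, StrictConvexOn ℝ univ (ψ l))
    (hint : ∀ θ ∈ s, Integrable (fun l => ψ l ⟪θ, v l⟫) μ)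
    (hsep : ∀ θ₁ ∈ s, ∀ θ₂ ∈ s, θ₁ ≠ θ₂ → μ {l | ⟪θ₁ - θ₂, v l⟫ ≠ 0} ≠ 0) :
    StrictConvexOn ℝ s fun θ => ∫ l, ψ l ⟪θ, v l⟫ ∂μ := by
  refine ⟨hs, fun θ₁ h₁ θ₂ h₂ hne a b ha hb hab => ?_⟩
  set gap : α → ℝ := fun l =>
    a * ψ l ⟪θ₁, v l⟫ + b * ψ l ⟪θ₂, v l⟫ - ψ l ⟪a • θ₁ + b • θ₂, v l⟫ with hgap
  have hinner (l : α) : ⟪a • θ₁ + b • θ₂, v l⟫ = a • ⟪θ₁, v l⟫ + b • ⟪θ₂, v l⟫ := by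
    rw [inner_add_left, real_inner_smul_left, real_inner_smul_left, smul_eq_mul, smul_eq_mul]
  have hgap_nonneg (l : α) : 0 ≤ gap l := by
    have := (hψ l).convexOn.2 (mem_univ ⟪θ₁, v l⟫) (mem_univ ⟪θ₂, v l⟫) ha.le hb.le hab
    simp only [hgap, hinner, smul_eq_mul] at this ⊢
    linarith
  have hgap_pos : {l | ⟪θ₁ - θ₂, v l⟫ ≠ 0} ⊆ Function.support gap := fun l hl => by
    have hne' : ⟪θ₁, v l⟫ ≠ ⟪θ₂, v l⟫ := by rwa [Ne, ← sub_eq_zero, ← inner_sub_left]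
    have := (hψ l).2 (mem_univ _) (mem_univ _) hne' ha hb hab
    simp only [hgap, hinner, smul_eq_mul, Function.mem_support] at this ⊢
    linarith
  have hint₁ := (hint θ₁ h₁).const_mul a
  have hint₂ := (hint θ₂ h₂).const_mul b
  have hint₁₂ : Integrable (fun l => a * ψ l ⟪θ₁, v l⟫ + b * ψ l ⟪θ₂, v l⟫) μ :=
    hint₁.add hint₂
  have hint₃ := hint _ (hs h₁ h₂ ha.le hb.le hab)
  have hpos : 0 < ∫ l, gap l ∂μ :=
    (integral_pos_iff_support_of_nonneg hgap_nonneg (hint₁₂.sub hint₃)).2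
      ((pos_iff_ne_zero.2 (hsep θ₁ h₁ θ₂ h₂ hne)).trans_le (measure_mono hgap_pos))
  rw [integral_sub hint₁₂ hint₃, integral_add hint₁ hint₂, integral_const_mul,
    integral_const_mul] at hpos
  simp only [smul_eq_mul]
  linarith

theorem exists_inner_ne_zero_of_mem_span {E : Type*} [NormedAddCommGroup E]
    [InnerProductSpace ℝ E] {s : Set E} {w : E} (hw : w ∈ Submodule.span ℝ s) (hw0 : w ≠ 0) :
    ∃ y ∈ s, ⟪w, y⟫ ≠ 0 := by
  by_contra! h
  have hle : Submodule.span ℝ s ≤ (ℝ ∙ w)ᗮ :=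
    Submodule.span_le.2 fun y hy => Submodule.mem_orthogonal_singleton_iff_inner_right.2 (h y hy)
  exact hw0 (inner_self_eq_zero.1 (Submodule.mem_orthogonal_singleton_iff_inner_right.1 (hle hw)))

theorem Continuous.integrable_of_measure_compl_eq_zero {X F : Type*} [TopologicalSpace X]
    [T2Space X] [MeasurableSpace X] [OpensMeasurableSpace X] [NormedAddCommGroup F]
    {μ : Measure X} [IsFiniteMeasureOnCompacts μ] {K : Set X} (hK : IsCompact K)
    (hμK : μ Kᶜ = 0) {f : X → F} (hf : Continuous f) : Integrable f μ := by
  rw [← Measure.restrict_eq_self_of_ae_mem (μ := μ) (s := K) (ae_iff.2 hμK)]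
  exact hf.continuousOn.integrableOn_compact hK

theorem measure_inner_segment_ne_zero {E : Type*} [NormedAddCommGroup E] [InnerProductSpace ℝ E]
    {μ : Measure ℝ} (hμ : ∀ l ∈ Icc (0 : ℝ) 1, ∀ U : Set ℝ, IsOpen U → l ∈ U → μ U ≠ 0)
    {x z w : E} (hw : w ∈ Submodule.span ℝ {x, z}) (hw0 : w ≠ 0) :
    μ {l | ⟪w, l • x + (1 - l) • z⟫ ≠ 0} ≠ 0 := by
  have hopen : IsOpen {l : ℝ | ⟪w, l • x + (1 - l) • z⟫ ≠ 0} :=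
    isOpen_ne_fun (by fun_prop) continuous_const
  obtain ⟨y, hy, hwy⟩ := exists_inner_ne_zero_of_mem_span hw hw0
  rcases hy with rfl | rfl
  · exact hμ 1 (right_mem_Icc.2 zero_le_one) _ hopen (by simpa using hwy)
  · exact hμ 0 (left_mem_Icc.2 zero_le_one) _ hopen (by simpa using hwy)

theorem twoPointMixupLoss_strictConvexOn_general (d : ℕ)
    (μ : Measure ℝ) [IsProbabilityMeasure μ]
    (hsupp_sub : μ (Set.Icc (0 : ℝ) 1)ᶜ = 0)
    (hsupp_full : ∀ l ∈ Set.Icc (0 : ℝ) 1, ∀ U : Set ℝ, IsOpen U → l ∈ U → μ U ≠ 0)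
    (x z : EuclideanSpace ℝ (Fin d)) :
    StrictConvexOn ℝ (Submodule.span ℝ {x, z} : Set (EuclideanSpace ℝ (Fin d)))
      (twoPointMixupLoss μ x z) :=
  strictConvexOn_integral_comp_inner (Submodule.span ℝ {x, z}).convex
    strictConvexOn_mixup_logisticLoss
    (fun _ _ => Continuous.integrable_of_measure_compl_eq_zero isCompact_Icc hsupp_sub
      (by fun_prop))
    fun _ h₁ _ h₂ hne =>
      measure_inner_segment_ne_zero hsupp_full (sub_mem h₁ h₂) (sub_ne_zero.2 hne)

/-- Strict convexity of the two-point Mixup loss on the span of the data (Lemma 4 of the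
paper): if `x, z` are linearly independent and the mixing measure has topological support
`[0,1]`, then `g` is strictly convex on `span {x, z}`. -/
theorem twoPointMixupLoss_strictConvexOn (d : ℕ) (hd : 2 ≤ d)
    (μ : Measure ℝ) [IsProbabilityMeasure μ]
    (hsupp_sub : μ (Set.Icc (0 : ℝ) 1)ᶜ = 0)
    (hsupp_full : ∀ l ∈ Set.Icc (0 : ℝ) 1, ∀ U : Set ℝ, IsOpen U → l ∈ U → μ U ≠ 0)
    (x z : EuclideanSpace ℝ (Fin d)) (hli : LinearIndependent ℝ ![x, z]) :
    StrictConvexOn ℝ (Submodule.span ℝ {x, z} : Set (EuclideanSpace ℝ (Fin d)))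
      (twoPointMixupLoss μ x z) :=
  twoPointMixupLoss_strictConvexOn_general d μ hsupp_sub hsupp_full x z
end
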